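/- Let (A, μ, α) be an ergodic W*-dynamical system with A^K the von Neumann subalgebra generated by the eigenoperators of α. Then the restriction μ|_{A^K} is a tracial state, and consequently A^K is a finite von Neumann algebra. -/

import Mathlib

noncomputable section

local notation "⟪" x ", " y "⟫" => @inner ℂ _ _ x y

/-- Conjugation of a bounded operator by a unitary (surjective linear isometry). -/
def conjAct {H : Type*} [NormedAddCommGroup H] [InnerProductSpace ℂ H]
    (u : H ≃ₗᵢ[ℂ] H) (a : H →L[ℂ] H) : H →L[ℂ] H :=
  u.toLinearIsometry.toContinuousLinearMap ∘L a ∘L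
    u.symm.toLinearIsometry.toContinuousLinearMap

/-!
Invariance of `μ = ⟪Ω, · Ω⟫` under the action gives `μ u = χ g * μ u` for an eigenoperator `u`
with character `χ`, so either `μ u = 0` or `u` is fixed, hence a scalar by ergodicity. Applied to
`u * star u`, with `Ω` separating, this makes every nonzero eigenoperator right invertible; applied
to `u * v`, it shows that `μ (u * v) ≠ 0` forces `u * v` to be a scalar and then `v * u = u * v`.
So `Ω` is a trace vector for the *-algebra `A` spanned by the eigenoperators.

A trace vector for a *-algebra `A` is one for `A''`. The projection onto the closure of `A Ω` lies
in `A'`, so `a Ω` lies in that closure for `a ∈ A''`. On `A` the map `x Ω ↦ star x Ω` is isometric,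
so right multiplication `y Ω ↦ y x Ω` is bounded and extends to an operator of `A'` sending `Ω` to
`x Ω`; commuting `a ∈ A''` past it gives `μ (a x) = μ (x a)`. Isometry again turns `y n Ω → b Ω`
into `star (y n) Ω → star b Ω`, which carries this from `x ∈ A` to `x ∈ A''`.

Finiteness: if `star v * v = 1` then `1 - v * star v` is a projection of trace `0`, so it kills the
separating vector `Ω`.
-/

open Filter Topology

namespace ContinuousLinearMap

variable {𝕜 E F : Type*} [RCLike 𝕜] [NormedAddCommGroup E] [InnerProductSpace 𝕜 E]
  [CompleteSpace E] [NormedAddCommGroup F] [NormedSpace 𝕜 F]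

theorem eq_of_eqOn_of_eqOn_orthogonal (W : Submodule 𝕜 E) {f g : E →L[𝕜] F}
    (hW : ∀ w ∈ W, f w = g w) (hWperp : ∀ ξ ∈ Wᗮ, f ξ = g ξ) : f = g := by
  set K := W.topologicalClosure
  have hK : Set.EqOn f g K := by
    rw [W.topologicalClosure_coe]
    exact Set.EqOn.closure hW f.continuous g.continuous
  ext ξ
  rw [← K.starProjection_add_starProjection_orthogonal ξ, map_add, map_add,
    hK (K.starProjection_apply_mem ξ)]
  congr 1
  apply hWperp
  rw [← W.orthogonal_closure]
  exact Kᗮ.starProjection_apply_mem ξ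

variable [CompleteSpace F]

theorem exists_comp_eq_of_norm_le {V : Type*} [AddCommGroup V] [Module 𝕜 V] (e : V →ₗ[𝕜] E)
    (f : V →ₗ[𝕜] F) (C : ℝ) (hf : ∀ v, ‖f v‖ ≤ C * ‖e v‖) :
    ∃ T : E →L[𝕜] F, (∀ v, T (e v) = f v) ∧ ∀ ξ ∈ (LinearMap.range e)ᗮ, T ξ = 0 := by
  set K := (LinearMap.range e).topologicalClosure
  let e' : V →ₗ[𝕜] K :=
    e.codRestrict K fun v ↦ (LinearMap.range e).le_topologicalClosure ⟨v, rfl⟩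
  have hdense : DenseRange e' := by
    rw [DenseRange, Subtype.dense_iff]
    intro ξ hξ
    rw [← Set.range_comp]
    exact hξ
  refine ⟨f.extendOfNorm e' ∘L K.orthogonalProjectionOnto, fun v ↦ ?_, fun ξ hξ ↦ ?_⟩
  · have : K.orthogonalProjectionOnto (e v) = e' v := by
      ext; exact K.starProjection_eq_self_iff.mpr (e' v).2
    simp only [coe_comp, Function.comp_apply, this]
    exact LinearMap.extendOfNorm_eq hdense ⟨C, hf⟩ v
  · rw [← Submodule.orthogonal_closure] at hξ
    simp [K.orthogonalProjectionOnto_eq_zero_iff.mpr hξ]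

end ContinuousLinearMap

section TraceVector

variable {H : Type*} [NormedAddCommGroup H] [InnerProductSpace ℂ H]

def IsTraceVector (s : Set (H →L[ℂ] H)) (Ω : H) : Prop :=
  ∀ a ∈ s, ∀ b ∈ s, ⟪Ω, (a * b) Ω⟫ = ⟪Ω, (b * a) Ω⟫

variable {Ω : H}

theorem IsTraceVector.mono {s t : Set (H →L[ℂ] H)} (h : IsTraceVector t Ω) (hst : s ⊆ t) :
    IsTraceVector s Ω :=
  fun a ha b hb ↦ h a (hst ha) b (hst hb)

theorem IsTraceVector.span {s : Set (H →L[ℂ] H)} (h : IsTraceVector s Ω) :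
    IsTraceVector (Submodule.span ℂ s) Ω := by
  intro a ha b hb
  induction ha, hb using Submodule.span_induction₂ with
  | mem_mem x y hx hy => exact h x hx y hy
  | zero_left | zero_right => simp
  | add_left | add_right | smul_left | smul_right =>
    simp_all [add_mul, mul_add]

variable [CompleteSpace H]

theorem inner_star_apply_apply (a b : H →L[ℂ] H) (Ω : H) :
    ⟪star a Ω, b Ω⟫ = ⟪Ω, (a * b) Ω⟫ := by
  rw [ContinuousLinearMap.star_eq_adjoint, ContinuousLinearMap.adjoint_inner_left]
  rfl

theorem IsTraceVector.starAlgebraAdjoin {s : Submonoid (H →L[ℂ] H)}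
    (hs : ∀ x ∈ s, star x ∈ s) (h : IsTraceVector s Ω) :
    IsTraceVector (StarAlgebra.adjoin ℂ (s : Set (H →L[ℂ] H))) Ω := by
  refine h.span.mono fun x hx ↦ ?_
  have hstar : (s : Set (H →L[ℂ] H)) ∪ star (s : Set (H →L[ℂ] H)) = s :=
    Set.union_eq_left.mpr fun y hy ↦ by simpa using hs _ hy
  change x ∈ Algebra.adjoin ℂ _ at hx
  rwa [hstar, ← Subalgebra.mem_toSubmodule, Algebra.adjoin_eq_span, Submonoid.closure_eq] at hx

namespace StarSubalgebra

def orbitMap (A : StarSubalgebra ℂ (H →L[ℂ] H)) (Ω : H) : A →ₗ[ℂ] H where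
  toFun y := (y : H →L[ℂ] H) Ω
  map_add' _ _ := rfl
  map_smul' _ _ := rfl

def orbit (A : StarSubalgebra ℂ (H →L[ℂ] H)) (Ω : H) : Submodule ℂ H :=
  LinearMap.range (orbitMap A Ω)

variable {A : StarSubalgebra ℂ (H →L[ℂ] H)}

theorem apply_mem_orbit {x : H →L[ℂ] H} (hx : x ∈ A) : x Ω ∈ orbit A Ω := ⟨⟨x, hx⟩, rfl⟩

theorem apply_mem_orbit_of_mem_orbit {z : H →L[ℂ] H} (hz : z ∈ A) {ξ : H}
    (hξ : ξ ∈ orbit A Ω) : z ξ ∈ orbit A Ω := by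
  obtain ⟨⟨y, hy⟩, rfl⟩ := hξ
  exact apply_mem_orbit (A.mul_mem hz hy)

theorem apply_mem_orbit_orthogonal {z : H →L[ℂ] H} (hz : z ∈ A) {ξ : H}
    (hξ : ξ ∈ (orbit A Ω)ᗮ) : z ξ ∈ (orbit A Ω)ᗮ := by
  intro w hw
  rw [← ContinuousLinearMap.adjoint_inner_left, ← ContinuousLinearMap.star_eq_adjoint]
  exact hξ _ (apply_mem_orbit_of_mem_orbit (star_mem hz) hw)

theorem starProjection_closure_orbit_mem_centralizer :
    (orbit A Ω).topologicalClosure.starProjection ∈ Set.centralizer (A : Set (H →L[ℂ] H)) := by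
  intro z hz
  refine ContinuousLinearMap.eq_of_eqOn_of_eqOn_orthogonal (orbit A Ω) (fun w hw ↦ ?_)
    fun ξ hξ ↦ ?_
  · have hP : ∀ η ∈ orbit A Ω, (orbit A Ω).topologicalClosure.starProjection η = η :=
      fun η hη ↦ Submodule.starProjection_eq_self_iff.mpr (Submodule.le_topologicalClosure _ hη)
    exact (congrArg z (hP w hw)).trans (hP _ (apply_mem_orbit_of_mem_orbit hz hw)).symm
  · have hP : ∀ η ∈ (orbit A Ω)ᗮ, (orbit A Ω).topologicalClosure.starProjection η = 0 :=
      fun η hη ↦ (Submodule.starProjection_apply_eq_zero_iff _).mpr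
        ((orbit A Ω).orthogonal_closure ▸ hη)
    rw [mul_apply_eq_comp, mul_apply_eq_comp, hP ξ hξ, hP _ (apply_mem_orbit_orthogonal hz hξ),
      map_zero]

theorem apply_mem_closure_orbit {a : H →L[ℂ] H}
    (ha : a ∈ Set.centralizer (Set.centralizer (A : Set (H →L[ℂ] H)))) :
    a Ω ∈ (orbit A Ω).topologicalClosure := by
  set P := (orbit A Ω).topologicalClosure.starProjection
  have hΩ : P Ω = Ω := Submodule.starProjection_eq_self_iff.mpr
    (Submodule.le_topologicalClosure _ (by simpa using apply_mem_orbit (Ω := Ω) A.one_mem))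
  have hcomm : P * a = a * P := ha P starProjection_closure_orbit_mem_centralizer
  have : a Ω = P (a Ω) := by
    conv_lhs => rw [← hΩ]
    exact (congrArg (· Ω) hcomm).symm
  rw [this]
  exact Submodule.starProjection_apply_mem _ _

theorem star_mem_centralizer_centralizer {a : H →L[ℂ] H}
    (ha : a ∈ Set.centralizer (Set.centralizer (A : Set (H →L[ℂ] H)))) :
    star a ∈ Set.centralizer (Set.centralizer (A : Set (H →L[ℂ] H))) :=
  Set.star_mem_centralizer' (fun _ hb ↦ Set.star_mem_centralizer' (fun _ ↦ star_mem) hb) ha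

end StarSubalgebra

open StarSubalgebra

variable {A : StarSubalgebra ℂ (H →L[ℂ] H)}

namespace IsTraceVector

variable (hA : IsTraceVector A Ω)
include hA

theorem norm_star_apply {x : H →L[ℂ] H} (hx : x ∈ A) : ‖star x Ω‖ = ‖x Ω‖ := by
  have h := hA _ (star_mem hx) _ hx
  rw [← inner_star_apply_apply, ← inner_star_apply_apply, star_star,
    inner_self_eq_norm_sq_to_K, inner_self_eq_norm_sq_to_K] at h
  have h' : ‖x Ω‖ ^ 2 = ‖star x Ω‖ ^ 2 := by exact_mod_cast h
  exact ((sq_eq_sq₀ (norm_nonneg _) (norm_nonneg _)).mp h').symm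

theorem norm_mul_apply_le {x y : H →L[ℂ] H} (hx : x ∈ A) (hy : y ∈ A) :
    ‖(y * x) Ω‖ ≤ ‖x‖ * ‖y Ω‖ :=
  calc ‖(y * x) Ω‖ = ‖star x (star y Ω)‖ := by
        rw [← hA.norm_star_apply (A.mul_mem hy hx), star_mul]; rfl
    _ ≤ ‖star x‖ * ‖star y Ω‖ := (star x).le_opNorm _
    _ = ‖x‖ * ‖y Ω‖ := by rw [norm_star, hA.norm_star_apply hy]

theorem exists_mem_centralizer_apply_eq {x : H →L[ℂ] H} (hx : x ∈ A) :
    ∃ R ∈ Set.centralizer (A : Set (H →L[ℂ] H)), ∀ y ∈ A, R (y Ω) = (y * x) Ω := by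
  obtain ⟨R, hRorbit, hRperp⟩ := ContinuousLinearMap.exists_comp_eq_of_norm_le
    (orbitMap A Ω) (orbitMap A (x Ω)) ‖x‖ fun y ↦ hA.norm_mul_apply_le hx y.2
  refine ⟨R, fun z hz ↦ ?_, fun y hy ↦ hRorbit ⟨y, hy⟩⟩
  refine ContinuousLinearMap.eq_of_eqOn_of_eqOn_orthogonal (orbit A Ω) ?_ fun ξ hξ ↦ ?_
  · rintro _ ⟨⟨y, hy⟩, rfl⟩
    exact congrArg z (hRorbit ⟨y, hy⟩) |>.trans (hRorbit ⟨z * y, A.mul_mem hz hy⟩).symm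
  · change z (R ξ) = R (z ξ)
    rw [hRperp ξ hξ, hRperp _ (apply_mem_orbit_orthogonal hz hξ), map_zero]

theorem inner_mul_comm_of_mem_centralizer_centralizer {a x : H →L[ℂ] H}
    (ha : a ∈ Set.centralizer (Set.centralizer (A : Set (H →L[ℂ] H)))) (hx : x ∈ A) :
    ⟪Ω, (a * x) Ω⟫ = ⟪Ω, (x * a) Ω⟫ := by
  obtain ⟨R, hR, hRA⟩ := hA.exists_mem_centralizer_apply_eq hx
  have hRΩ : R Ω = x Ω := by simpa using hRA 1 A.one_mem
  have hperp : star R Ω - star x Ω ∈ (orbit A Ω).topologicalClosureᗮ := by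
    rw [Submodule.orthogonal_closure]
    rintro _ ⟨⟨y, hy⟩, rfl⟩
    change ⟪y Ω, star R Ω - star x Ω⟫ = 0
    rw [inner_eq_zero_symm, inner_sub_left, sub_eq_zero, inner_star_apply_apply,
      inner_star_apply_apply, mul_apply_eq_comp, hRA y hy, hA y hy x hx]
  have hRa : a (R Ω) = R (a Ω) := (congrArg (· Ω) (ha R hR)).symm
  calc ⟪Ω, (a * x) Ω⟫ = ⟪Ω, R (a Ω)⟫ := by rw [mul_apply_eq_comp, ← hRΩ, hRa]
    _ = ⟪star R Ω, a Ω⟫ := (inner_star_apply_apply R a Ω).symm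
    _ = ⟪star x Ω, a Ω⟫ := by
      rw [← sub_eq_zero, ← inner_sub_left]
      exact Submodule.inner_left_of_mem_orthogonal (apply_mem_closure_orbit ha) hperp
    _ = ⟪Ω, (x * a) Ω⟫ := inner_star_apply_apply x a Ω

theorem tendsto_star_apply {b : H →L[ℂ] H}
    (hb : b ∈ Set.centralizer (Set.centralizer (A : Set (H →L[ℂ] H))))
    {y : ℕ → H →L[ℂ] H} (hy : ∀ n, y n ∈ A) (hlim : Tendsto (fun n ↦ y n Ω) atTop (𝓝 (b Ω))) :
    Tendsto (fun n ↦ star (y n) Ω) atTop (𝓝 (star b Ω)) := by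
  have hcauchy : CauchySeq fun n ↦ star (y n) Ω := by
    have hdist : ∀ m n, dist (star (y m) Ω) (star (y n) Ω) = dist (y m Ω) (y n Ω) := by
      intro m n
      rw [dist_eq_norm, dist_eq_norm, ← sub_apply, ← star_sub,
        ← sub_apply, hA.norm_star_apply (A.sub_mem (hy m) (hy n))]
    rw [cauchySeq_iff_tendsto_dist_atTop_0]
    simpa only [hdist] using cauchySeq_iff_tendsto_dist_atTop_0.mp hlim.cauchySeq
  obtain ⟨ζ, hζ⟩ := cauchySeq_tendsto_of_complete hcauchy
  suffices ζ = star b Ω from this ▸ hζ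
  set K := (orbit A Ω).topologicalClosure
  have hζK : ζ ∈ K := (orbit A Ω).isClosed_topologicalClosure.mem_of_tendsto hζ
    (Eventually.of_forall fun n ↦ (orbit A Ω).le_topologicalClosure
      (apply_mem_orbit (star_mem (hy n))))
  have hbK : star b Ω ∈ K := apply_mem_closure_orbit (star_mem_centralizer_centralizer hb)
  have hperp : ζ - star b Ω ∈ Kᗮ := by
    rw [Submodule.orthogonal_closure]
    rintro _ ⟨⟨z, hz⟩, rfl⟩
    change ⟪z Ω, ζ - star b Ω⟫ = 0
    rw [inner_eq_zero_symm, inner_sub_left, sub_eq_zero]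
    refine tendsto_nhds_unique (hζ.inner tendsto_const_nhds) ?_
    have h : (fun n ↦ ⟪star (y n) Ω, z Ω⟫) = fun n ↦ ⟪star z Ω, y n Ω⟫ := funext fun n ↦ by
      rw [inner_star_apply_apply, inner_star_apply_apply, hA _ (hy n) _ hz]
    rw [h, inner_star_apply_apply b z Ω, hA.inner_mul_comm_of_mem_centralizer_centralizer hb hz,
      ← inner_star_apply_apply]
    exact tendsto_const_nhds.inner hlim
  exact sub_eq_zero.mp (inner_self_eq_zero.mp
    (Submodule.inner_right_of_mem_orthogonal (K.sub_mem hζK hbK) hperp))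

theorem centralizer_centralizer :
    IsTraceVector (Set.centralizer (Set.centralizer (A : Set (H →L[ℂ] H)))) Ω := by
  intro a ha b hb
  obtain ⟨y, hyA, hy⟩ : ∃ y : ℕ → H →L[ℂ] H, (∀ n, y n ∈ A) ∧
      Tendsto (fun n ↦ y n Ω) atTop (𝓝 (b Ω)) := by
    have hbK := apply_mem_closure_orbit (Ω := Ω) hb
    rw [← SetLike.mem_coe, Submodule.topologicalClosure_coe, mem_closure_iff_seq_limit] at hbK
    obtain ⟨ξ, hξ, hlim⟩ := hbK
    choose y hy using hξ
    refine ⟨fun n ↦ y n, fun n ↦ (y n).2, ?_⟩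
    rwa [show (fun n ↦ (y n : H →L[ℂ] H) Ω) = ξ from funext hy]
  have hlim : Tendsto (fun n ↦ ⟪star a Ω, y n Ω⟫) atTop (𝓝 ⟪star b Ω, a Ω⟫) := by
    have h : (fun n ↦ ⟪star a Ω, y n Ω⟫) = fun n ↦ ⟪star (y n) Ω, a Ω⟫ := funext fun n ↦ by
      rw [inner_star_apply_apply, inner_star_apply_apply,
        hA.inner_mul_comm_of_mem_centralizer_centralizer ha (hyA n)]
    rw [h]
    exact (hA.tendsto_star_apply hb hyA hy).inner tendsto_const_nhds
  rw [← inner_star_apply_apply, ← inner_star_apply_apply]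
  exact tendsto_nhds_unique (tendsto_const_nhds.inner hy) hlim

end IsTraceVector

end TraceVector

theorem mul_comm_of_commute_of_mul_eq_one {R : Type*} [Monoid R] {u v w : R}
    (h : Commute (u * v) v) (hw : v * w = 1) : v * u = u * v :=
  calc v * u = v * (u * v) * w := by rw [mul_assoc, mul_assoc, hw, mul_one]
    _ = u * v := by rw [← h.eq, mul_assoc, hw, mul_one]

section Eigenoperators

variable {H : Type*} [NormedAddCommGroup H] [InnerProductSpace ℂ H]

@[simp]
theorem conjAct_apply (u : H ≃ₗᵢ[ℂ] H) (a : H →L[ℂ] H) (ξ : H) :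
    conjAct u a ξ = u (a (u.symm ξ)) := rfl

theorem conjAct_one (u : H ≃ₗᵢ[ℂ] H) : conjAct u 1 = 1 := by
  ext; simp

theorem conjAct_mul (u : H ≃ₗᵢ[ℂ] H) (a b : H →L[ℂ] H) :
    conjAct u (a * b) = conjAct u a * conjAct u b := by
  ext; simp

theorem inner_conjAct_apply_self {u : H ≃ₗᵢ[ℂ] H} {Ω : H} (hu : u Ω = Ω) (a : H →L[ℂ] H) :
    ⟪Ω, conjAct u a Ω⟫ = ⟪Ω, a Ω⟫ :=
  calc ⟪Ω, conjAct u a Ω⟫ = ⟪u Ω, u (a Ω)⟫ := by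
        rw [conjAct_apply, u.symm_apply_eq.mpr hu.symm, hu]
    _ = ⟪Ω, a Ω⟫ := u.inner_map_map _ _

theorem conjAct_star [CompleteSpace H] (u : H ≃ₗᵢ[ℂ] H) (a : H →L[ℂ] H) :
    conjAct u (star a) = star (conjAct u a) := by
  rw [ContinuousLinearMap.star_eq_adjoint, ContinuousLinearMap.star_eq_adjoint,
    ContinuousLinearMap.eq_adjoint_iff]
  intro ξ η
  rw [conjAct_apply, conjAct_apply, u.inner_map_eq_flip, ContinuousLinearMap.adjoint_inner_left,
    u.symm.inner_map_eq_flip, LinearIsometryEquiv.symm_symm]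

variable {G : Type*} (U : G → (H ≃ₗᵢ[ℂ] H))

def IsEigenoperator (u : H →L[ℂ] H) : Prop :=
  ∃ χ : G → ℂ, ∀ g, conjAct (U g) u = χ g • u

variable {U}

theorem isEigenoperator_one : IsEigenoperator U 1 :=
  ⟨1, fun g ↦ by rw [conjAct_one, Pi.one_apply, one_smul]⟩

theorem IsEigenoperator.mul {u v : H →L[ℂ] H} (hu : IsEigenoperator U u)
    (hv : IsEigenoperator U v) : IsEigenoperator U (u * v) := by
  obtain ⟨χ, hχ⟩ := hu
  obtain ⟨ψ, hψ⟩ := hv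
  exact ⟨χ * ψ, fun g ↦ by rw [conjAct_mul, hχ, hψ, smul_mul_smul, Pi.mul_apply]⟩

theorem IsEigenoperator.star [CompleteSpace H] {u : H →L[ℂ] H} (hu : IsEigenoperator U u) :
    IsEigenoperator U (star u) := by
  obtain ⟨χ, hχ⟩ := hu
  exact ⟨fun g ↦ Star.star (χ g), fun g ↦ by rw [conjAct_star, hχ, star_smul]⟩

variable [CompleteSpace H]

-- Unlike the set in the theorem, this one contains `0`, which makes it a submonoid.
def eigenoperators (M : StarSubalgebra ℂ (H →L[ℂ] H)) (U : G → (H ≃ₗᵢ[ℂ] H)) :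
    Submonoid (H →L[ℂ] H) where
  carrier := {u | u ∈ M ∧ IsEigenoperator U u}
  one_mem' := ⟨M.one_mem, isEigenoperator_one⟩
  mul_mem' hu hv := ⟨M.mul_mem hu.1 hv.1, hu.2.mul hv.2⟩

variable {M : StarSubalgebra ℂ (H →L[ℂ] H)}

theorem star_mem_eigenoperators {u : H →L[ℂ] H} (hu : u ∈ eigenoperators M U) :
    star u ∈ eigenoperators M U :=
  ⟨star_mem hu.1, hu.2.star⟩

variable {Ω : H} (hUΩ : ∀ g, U g Ω = Ω)
  (herg : ∀ a ∈ M, (∀ g, conjAct (U g) a = a) → ∃ c : ℂ, a = c • (1 : H →L[ℂ] H))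
  (hsep : ∀ a ∈ M, a Ω = 0 → a = 0)
include hUΩ herg

theorem exists_eq_smul_one_of_inner_ne_zero {u : H →L[ℂ] H} (hu : u ∈ eigenoperators M U)
    (h : ⟪Ω, u Ω⟫ ≠ 0) : ∃ c : ℂ, u = c • 1 := by
  obtain ⟨huM, χ, hχ⟩ := hu
  refine herg u huM fun g ↦ ?_
  have hχg : χ g = 1 := by
    have hinv := inner_conjAct_apply_self (hUΩ g) u
    rw [hχ g, smul_apply, inner_smul_right] at hinv
    exact (mul_eq_right₀ h).mp hinv
  rw [hχ g, hχg, one_smul]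

include hsep

theorem exists_mul_eq_one_of_mem_eigenoperators {u : H →L[ℂ] H}
    (hu : u ∈ eigenoperators M U) (hne : u ≠ 0) : ∃ w, u * w = 1 := by
  have hstar := star_mem_eigenoperators hu
  have hpos : ⟪Ω, (u * star u) Ω⟫ ≠ 0 := by
    rw [← inner_star_apply_apply, inner_self_ne_zero]
    exact fun h ↦ star_ne_zero.mpr hne (hsep _ hstar.1 h)
  obtain ⟨c, hc⟩ := exists_eq_smul_one_of_inner_ne_zero hUΩ herg (mul_mem hu hstar) hpos
  have hc0 : c ≠ 0 := by
    rintro rfl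
    simp [hc] at hpos
  exact ⟨c⁻¹ • star u, by rw [mul_smul_comm, hc, smul_smul, inv_mul_cancel₀ hc0, one_smul]⟩

theorem inner_mul_comm_of_inner_ne_zero {u v : H →L[ℂ] H} (hu : u ∈ eigenoperators M U)
    (hv : v ∈ eigenoperators M U) (h : ⟪Ω, (u * v) Ω⟫ ≠ 0) :
    ⟪Ω, (u * v) Ω⟫ = ⟪Ω, (v * u) Ω⟫ := by
  obtain ⟨c, hc⟩ := exists_eq_smul_one_of_inner_ne_zero hUΩ herg (mul_mem hu hv) h
  have hv0 : v ≠ 0 := by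
    rintro rfl
    simp at h
  obtain ⟨w, hw⟩ := exists_mul_eq_one_of_mem_eigenoperators hUΩ herg hsep hv hv0
  have hcomm : Commute (u * v) v := hc ▸ (Commute.one_left v).smul_left c
  rw [mul_comm_of_commute_of_mul_eq_one hcomm hw]

theorem isTraceVector_eigenoperators : IsTraceVector (eigenoperators M U) Ω := by
  intro u hu v hv
  by_cases huv : ⟪Ω, (u * v) Ω⟫ = 0
  · by_cases hvu : ⟪Ω, (v * u) Ω⟫ = 0
    · rw [huv, hvu]
    · exact (inner_mul_comm_of_inner_ne_zero hUΩ herg hsep hv hu hvu).symm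
  · exact inner_mul_comm_of_inner_ne_zero hUΩ herg hsep hu hv huv

end Eigenoperators

theorem mul_star_eq_one_of_star_mul_eq_one {H : Type*} [NormedAddCommGroup H]
    [InnerProductSpace ℂ H] [CompleteSpace H] {A : StarSubalgebra ℂ (H →L[ℂ] H)} {Ω : H}
    (hΩ : ‖Ω‖ = 1) (hsep : ∀ a ∈ A, a Ω = 0 → a = 0) {v : H →L[ℂ] H} (hv : v ∈ A)
    (htr : ⟪Ω, (star v * v) Ω⟫ = ⟪Ω, (v * star v) Ω⟫) (h : star v * v = 1) :
    v * star v = 1 := by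
  set p := 1 - v * star v
  have hidem : IsIdempotentElem (v * star v) := by
    rw [IsIdempotentElem, mul_assoc, ← mul_assoc (star v), h, one_mul]
  have hself : star p = p := by simp [p]
  have hpΩ : p Ω = 0 := by
    rw [← inner_self_eq_zero (𝕜 := ℂ)]
    nth_rewrite 1 [← hself]
    rw [inner_star_apply_apply, hidem.one_sub.eq, sub_apply, inner_sub_right, ← htr, h,
      one_apply_eq_self, inner_self_eq_norm_sq_to_K, hΩ]
    norm_num
  exact (sub_eq_zero.mp (hsep p (sub_mem (one_mem A) (mul_mem hv (star_mem hv))) hpΩ)).symm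

theorem state_tracial_on_eigenoperator_algebra_of_ergodic_general
    {H : Type*} [NormedAddCommGroup H] [InnerProductSpace ℂ H] [CompleteSpace H]
    {G : Type*} [Group G]
    (M : VonNeumannAlgebra H) (Ω : H) (hΩ : ‖Ω‖ = 1)
    (hsep : ∀ a ∈ M, a Ω = 0 → a = 0)
    (U : G →* (H ≃ₗᵢ[ℂ] H)) (hUΩ : ∀ g, U g Ω = Ω)
    (herg : ∀ a ∈ M, (∀ g, conjAct (U g) a = a) → ∃ c : ℂ, a = c • (1 : H →L[ℂ] H))
    (AK : Set (H →L[ℂ] H))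
    (hAK : AK = Set.centralizer (Set.centralizer
      {u : H →L[ℂ] H | u ∈ M ∧ u ≠ 0 ∧ ∃ χ : G → ℂ, ∀ g, conjAct (U g) u = χ g • u})) :
    (∀ a ∈ AK, ∀ b ∈ AK, ⟪Ω, (a ∘L b) Ω⟫ = ⟪Ω, (b ∘L a) Ω⟫) ∧
    (∀ v ∈ AK, star v * v = 1 → v * star v = 1) := by
  set A := StarAlgebra.adjoin ℂ (eigenoperators M.toStarSubalgebra U : Set (H →L[ℂ] H))
  have hAK_sub : AK ⊆ Set.centralizer (Set.centralizer (A : Set (H →L[ℂ] H))) := by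
    rw [hAK]
    exact Set.centralizer_subset (Set.centralizer_subset fun u hu ↦
      StarAlgebra.subset_adjoin ℂ _ ⟨hu.1, hu.2.2⟩)
  have hM : Set.centralizer (Set.centralizer (A : Set (H →L[ℂ] H))) ⊆ M := by
    rw [← M.centralizer_centralizer]
    exact Set.centralizer_subset (Set.centralizer_subset
      (StarAlgebra.adjoin_le (S := M.toStarSubalgebra) fun u hu ↦ hu.1))
  have htr : IsTraceVector (Set.centralizer (Set.centralizer (A : Set (H →L[ℂ] H)))) Ω :=
    ((isTraceVector_eigenoperators hUΩ herg hsep).starAlgebraAdjoin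
      fun _ ↦ star_mem_eigenoperators).centralizer_centralizer
  refine ⟨fun a ha b hb ↦ htr a (hAK_sub ha) b (hAK_sub hb), fun v hv h ↦ ?_⟩
  exact mul_star_eq_one_of_star_mul_eq_one hΩ hsep (hM (hAK_sub hv))
    (htr _ (StarSubalgebra.star_mem_centralizer_centralizer (hAK_sub hv)) _ (hAK_sub hv)) h

theorem state_tracial_on_eigenoperator_algebra_of_ergodic
    {H : Type*} [NormedAddCommGroup H] [InnerProductSpace ℂ H] [CompleteSpace H]
    {G : Type*} [Group G]
    (M : VonNeumannAlgebra H) (Ω : H) (hΩ : ‖Ω‖ = 1)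
    (hcyc : Dense ((fun a : H →L[ℂ] H => a Ω) '' (M : Set (H →L[ℂ] H))))
    (hsep : ∀ a ∈ M, a Ω = 0 → a = 0)
    (U : G →* (H ≃ₗᵢ[ℂ] H)) (hUΩ : ∀ g, U g Ω = Ω)
    (hUM : ∀ g, conjAct (U g) '' (M : Set (H →L[ℂ] H)) = (M : Set (H →L[ℂ] H)))
    (herg : ∀ a ∈ M, (∀ g, conjAct (U g) a = a) → ∃ c : ℂ, a = c • (1 : H →L[ℂ] H))
    (AK : Set (H →L[ℂ] H))
    (hAK : AK = Set.centralizer (Set.centralizer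
      {u : H →L[ℂ] H | u ∈ M ∧ u ≠ 0 ∧ ∃ χ : G → ℂ, ∀ g, conjAct (U g) u = χ g • u})) :
    (∀ a ∈ AK, ∀ b ∈ AK, ⟪Ω, (a ∘L b) Ω⟫ = ⟪Ω, (b ∘L a) Ω⟫) ∧
    (∀ v ∈ AK, star v * v = 1 → v * star v = 1) :=
  state_tracial_on_eigenoperator_algebra_of_ergodic_general M Ω hΩ hsep U hUΩ herg AK hAK
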